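/- For jointly distributed finite random variables $V_0, V_1, V_2, X, Y_2$ such that $(V_0,V_1,V_2) \leftrightarrow X \leftrightarrow Y_2$ form a Markov chain, we have $I(X;Y_2\mid V_0,V_1) \geq I(V_2;Y_2\mid V_0) - I(V_1;V_2\mid V_0)$. -/

import Mathlib

open Finset Real

namespace IT

variable {Ω : Type} [Fintype Ω]

/-- Distribution (pushforward pmf) of a random variable `X` under pmf `p`. -/
noncomputable def pm {α : Type} [Fintype α] [DecidableEq α]
    (p : Ω → ℝ) (X : Ω → α) : α → ℝ :=
  fun a => ∑ ω, if X ω = a then p ω else 0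

/-- Shannon entropy (in nats) of a pmf `q` on a finite alphabet. -/
noncomputable def ent {α : Type} [Fintype α] (q : α → ℝ) : ℝ :=
  -∑ a, q a * Real.log (q a)

/-- Entropy of a random variable. -/
noncomputable def H {α : Type} [Fintype α] [DecidableEq α]
    (p : Ω → ℝ) (X : Ω → α) : ℝ :=
  ent (pm p X)

/-- Mutual information `I(X;Y)`. -/
noncomputable def I2 {α β : Type} [Fintype α] [DecidableEq α] [Fintype β] [DecidableEq β]
    (p : Ω → ℝ) (X : Ω → α) (Y : Ω → β) : ℝ :=
  H p X + H p Y - H p (fun ω => (X ω, Y ω))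

/-- Conditional entropy `H(X∣Y)`. -/
noncomputable def cH {α β : Type} [Fintype α] [DecidableEq α] [Fintype β] [DecidableEq β]
    (p : Ω → ℝ) (X : Ω → α) (Y : Ω → β) : ℝ :=
  H p (fun ω => (X ω, Y ω)) - H p Y

/-- Conditional mutual information `I(X;Y∣Z)`. -/
noncomputable def cI {α β γ : Type} [Fintype α] [DecidableEq α] [Fintype β] [DecidableEq β]
    [Fintype γ] [DecidableEq γ]
    (p : Ω → ℝ) (X : Ω → α) (Y : Ω → β) (Z : Ω → γ) : ℝ :=
  cH p X Z + cH p Y Z - cH p (fun ω => (X ω, Y ω)) Z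

/-- `p` is a probability mass function. -/
def IsPMF (p : Ω → ℝ) : Prop :=
  (∀ ω, 0 ≤ p ω) ∧ ∑ ω, p ω = 1

/-- `X` and `Y` are conditionally independent given `Z` (Markov chain `X ↔ Z ↔ Y`). -/
def CondIndep {α β γ : Type} [Fintype α] [DecidableEq α] [Fintype β] [DecidableEq β]
    [Fintype γ] [DecidableEq γ]
    (p : Ω → ℝ) (X : Ω → α) (Y : Ω → β) (Z : Ω → γ) : Prop :=
  ∀ x y z,
    pm p (fun ω => ((X ω, Y ω), Z ω)) ((x, y), z) * pm p Z z
      = pm p (fun ω => (X ω, Z ω)) (x, z) * pm p (fun ω => (Y ω, Z ω)) (y, z)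

end IT

/-!
Nonnegativity of `I(A;B∣C)` is Gibbs' inequality (`log x ≤ x - 1`) comparing the joint law of
`(A,B,C)` with `p(a,c) p(b,c) / p(c)`, and conditional independence makes the two equal. The
Markov chain gives `I((V₀,V₁,V₂);Y₂∣X) = 0`, so conditional data processing yields
`I(X;Y₂∣V₀,V₁) ≥ I(V₂;Y₂∣V₀,V₁)`; expanding `I(V₂;V₁,Y₂∣V₀)` by the chain rule in two ways yields
`I(V₂;Y₂∣V₀,V₁) ≥ I(V₂;Y₂∣V₀) - I(V₁;V₂∣V₀)`.
-/

namespace IT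

variable {Ω α β γ δ : Type} [Fintype Ω] [Fintype α] [DecidableEq α] [Fintype β] [DecidableEq β]
  [Fintype γ] [DecidableEq γ] [Fintype δ] [DecidableEq δ]

lemma pm_nonneg {p : Ω → ℝ} (hp : ∀ ω, 0 ≤ p ω) (X : Ω → α) (a : α) : 0 ≤ pm p X a :=
  sum_nonneg fun ω _ => by split_ifs <;> simp [hp ω]

lemma sum_pm (p : Ω → ℝ) (X : Ω → α) (F : α → ℝ) :
    ∑ a, pm p X a * F a = ∑ ω, p ω * F (X ω) := by
  simp only [pm, sum_mul, ite_mul, zero_mul]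
  rw [sum_comm]
  exact sum_congr rfl fun ω _ => by simp

lemma pm_comp (p : Ω → ℝ) (X : Ω → α) (f : α → β) :
    pm p (fun ω => f (X ω)) = pm (pm p X) f := by
  funext b
  simpa [pm] using (sum_pm p X fun a => if f a = b then 1 else 0).symm

lemma le_pm_apply {p : Ω → ℝ} (hp : ∀ ω, 0 ≤ p ω) (X : Ω → α) (ω : Ω) : p ω ≤ pm p X (X ω) :=
  single_le_sum (f := fun ω' => if X ω' = X ω then p ω' else 0)
    (fun ω' _ => by split_ifs <;> simp [hp ω']) (mem_univ ω) |>.trans_eq' (by simp)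

lemma sum_pm_prod_mk (p : Ω → ℝ) (X : Ω → α) (Y : Ω → β) (b : β) :
    ∑ a, pm p (fun ω => (X ω, Y ω)) (a, b) = pm p Y b := by
  simp only [pm, Prod.mk.injEq]
  rw [sum_comm]
  exact sum_congr rfl fun ω _ => by simp [ite_and]

lemma ent_pm (p : Ω → ℝ) (X : Ω → α) :
    ent (pm p X) = -∑ ω, p ω * log (pm p X (X ω)) := by
  rw [ent, sum_pm p X fun a => log (pm p X a)]

lemma pm_apply_of_injective (p : Ω → ℝ) {X : Ω → α} (hX : Function.Injective X) (ω : Ω) :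
    pm p X (X ω) = p ω :=
  (sum_eq_single ω (fun _ _ h => if_neg (hX.ne h)) (by simp)).trans (if_pos rfl)

lemma ent_pm_of_injective (p : Ω → ℝ) {X : Ω → α} (hX : Function.Injective X) :
    ent (pm p X) = ent p := by
  rw [ent_pm, ent]
  simp only [pm_apply_of_injective p hX]

lemma H_comp (p : Ω → ℝ) (X : Ω → α) (f : α → β) : H p (fun ω => f (X ω)) = H (pm p X) f := by
  rw [H, pm_comp, H]

lemma H_comp_of_injective (p : Ω → ℝ) (X : Ω → α) {f : α → β} (hf : Function.Injective f) :
    H p (fun ω => f (X ω)) = H p X := by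
  rw [H, pm_comp, ent_pm_of_injective _ hf, H]

lemma cI_eq_cI_pm (p : Ω → ℝ) (A : Ω → α) (B : Ω → β) (C : Ω → γ) :
    cI p A B C
      = cI (pm p fun ω => ((A ω, B ω), C ω)) (fun t => t.1.1) (fun t => t.1.2) Prod.snd := by
  simp only [cI, cH, ← H_comp]

lemma cI_pm_eq_sum (q : (α × β) × γ → ℝ) :
    cI q (fun t => t.1.1) (fun t => t.1.2) Prod.snd
      = ∑ t, q t * (log (q t) + log (pm q Prod.snd t.2)
          - log (pm q (fun t => (t.1.1, t.2)) (t.1.1, t.2))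
          - log (pm q (fun t => (t.1.2, t.2)) (t.1.2, t.2))) := by
  simp only [cI, cH, H, ent_pm, pm_apply_of_injective q (X := fun t => ((t.1.1, t.1.2), t.2))
    fun _ _ h => h]
  simp only [mul_add, mul_sub, sum_add_distrib, sum_sub_distrib]
  ring

lemma sum_marginal_mul_div (q : (α × β) × γ → ℝ) :
    ∑ t : (α × β) × γ, pm q (fun t => (t.1.1, t.2)) (t.1.1, t.2)
      * pm q (fun t => (t.1.2, t.2)) (t.1.2, t.2) / pm q Prod.snd t.2 = ∑ t, q t := by
  calc _ = ∑ c, (∑ a, pm q (fun t => (t.1.1, t.2)) (a, c))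
          * (∑ b, pm q (fun t => (t.1.2, t.2)) (b, c)) / pm q Prod.snd c := by
        simp only [Fintype.sum_prod_type, sum_mul_sum, sum_div]
        exact (sum_congr rfl fun _ _ => sum_comm).trans sum_comm
    _ = ∑ c, pm q Prod.snd c * pm q Prod.snd c / pm q Prod.snd c := by
        simp only [sum_pm_prod_mk]
    _ = ∑ t, q t := by
        simpa [mul_self_div_self] using sum_pm q Prod.snd fun _ => 1

lemma sub_mul_div_le_mul_log {q a b c : ℝ} (hq : 0 ≤ q) (ha : q ≤ a) (hb : q ≤ b) (hc : q ≤ c) :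
    q - a * b / c ≤ q * (log q + log c - log a - log b) := by
  rcases hq.eq_or_lt with rfl | hq
  · simpa using div_nonneg (mul_nonneg ha hb) hc
  have ha := hq.trans_le ha
  have hb := hq.trans_le hb
  have hc := hq.trans_le hc
  have hlog := log_le_sub_one_of_pos (x := a * b / (q * c)) (by positivity)
  rw [log_div (by positivity) (by positivity), log_mul (by positivity) (by positivity),
    log_mul hq.ne' (by positivity)] at hlog
  have hdiv : q * (a * b / (q * c)) = a * b / c := by field_simp
  nlinarith [mul_le_mul_of_nonneg_left hlog hq.le]

lemma mul_log_eq_zero_of_mul_eq {q a b c : ℝ} (hq : 0 ≤ q) (ha : q ≤ a) (hb : q ≤ b)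
    (hc : q ≤ c) (h : q * c = a * b) : q * (log q + log c - log a - log b) = 0 := by
  rcases hq.eq_or_lt with rfl | hq
  · rw [zero_mul]
  have ha := hq.trans_le ha
  have hb := hq.trans_le hb
  have hc := hq.trans_le hc
  rw [← log_mul hq.ne' (by positivity), h, log_mul (by positivity) (by positivity)]
  ring

theorem cI_nonneg {p : Ω → ℝ} (hp : ∀ ω, 0 ≤ p ω) (A : Ω → α) (B : Ω → β) (C : Ω → γ) :
    0 ≤ cI p A B C := by
  rw [cI_eq_cI_pm, cI_pm_eq_sum]
  set q := pm p fun ω => ((A ω, B ω), C ω)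
  have hq : ∀ t, 0 ≤ q t := pm_nonneg hp _
  rw [← sub_self (∑ t, q t)]
  nth_rw 2 [← sum_marginal_mul_div]
  rw [← sum_sub_distrib]
  exact sum_le_sum fun t _ => sub_mul_div_le_mul_log (hq t) (le_pm_apply hq _ t)
    (le_pm_apply hq _ t) (le_pm_apply hq _ t)

theorem cI_eq_zero_of_condIndep {p : Ω → ℝ} (hp : ∀ ω, 0 ≤ p ω) {A : Ω → α} {B : Ω → β}
    {C : Ω → γ} (h : CondIndep p A B C) : cI p A B C = 0 := by
  rw [cI_eq_cI_pm, cI_pm_eq_sum]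
  set q := pm p fun ω => ((A ω, B ω), C ω)
  have hq : ∀ t, 0 ≤ q t := pm_nonneg hp _
  refine sum_eq_zero fun t _ => mul_log_eq_zero_of_mul_eq (hq t) (le_pm_apply hq _ t)
    (le_pm_apply hq _ t) (le_pm_apply hq _ t) ?_
  simpa only [q, ← pm_comp] using h t.1.1 t.1.2 t.2

lemma cI_comp_left_of_injective (p : Ω → ℝ) (A : Ω → α) (B : Ω → β) (C : Ω → γ) {f : α → δ}
    (hf : Function.Injective f) : cI p (fun ω => f (A ω)) B C = cI p A B C := by
  have hAC : H p (fun ω => (f (A ω), C ω)) = H p (fun ω => (A ω, C ω)) :=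
    H_comp_of_injective p (fun ω => (A ω, C ω)) (f := Prod.map f id)
      (hf.prodMap Function.injective_id)
  have hABC : H p (fun ω => ((f (A ω), B ω), C ω)) = H p (fun ω => ((A ω, B ω), C ω)) :=
    H_comp_of_injective p (fun ω => ((A ω, B ω), C ω)) (f := Prod.map (Prod.map f id) id)
      ((hf.prodMap Function.injective_id).prodMap Function.injective_id)
  simp only [cI, cH, hAC, hABC]

theorem cI_le_cI_of_cI_eq_zero {p : Ω → ℝ} (hp : ∀ ω, 0 ≤ p ω) {W : Ω → α} {X : Ω → β}
    {Y : Ω → γ} {C : Ω → δ} (h : cI p (fun ω => (W ω, C ω)) Y X = 0) :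
    cI p W Y C ≤ cI p X Y C := by
  -- `I(X;Y∣C) - I(W;Y∣C) = I(C;Y∣X) - I(W,C;Y∣X) + I(X;Y∣W,C)`
  have hCX : H p (fun ω => (C ω, X ω)) = H p (fun ω => (X ω, C ω)) :=
    H_comp_of_injective p (fun ω => (X ω, C ω)) (f := Prod.swap) Prod.swap_injective
  have hCYX : H p (fun ω => ((C ω, Y ω), X ω)) = H p (fun ω => ((X ω, Y ω), C ω)) :=
    H_comp_of_injective p (fun ω => ((X ω, Y ω), C ω)) (f := fun t => ((t.2, t.1.2), t.1.1))
      fun _ _ h => by simp_all [Prod.ext_iff]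
  have hWCX : H p (fun ω => ((W ω, C ω), X ω)) = H p (fun ω => (X ω, (W ω, C ω))) :=
    H_comp_of_injective p (fun ω => (X ω, (W ω, C ω))) (f := Prod.swap) Prod.swap_injective
  have hWCYX :
      H p (fun ω => (((W ω, C ω), Y ω), X ω)) = H p (fun ω => ((X ω, Y ω), (W ω, C ω))) :=
    H_comp_of_injective p (fun ω => ((X ω, Y ω), (W ω, C ω)))
      (f := fun t => ((t.2, t.1.2), t.1.1)) fun _ _ h => by simp_all [Prod.ext_iff]
  have hYWC : H p (fun ω => (Y ω, (W ω, C ω))) = H p (fun ω => ((W ω, Y ω), C ω)) :=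
    H_comp_of_injective p (fun ω => ((W ω, Y ω), C ω)) (f := fun t => (t.1.2, (t.1.1, t.2)))
      fun _ _ h => by simp_all [Prod.ext_iff]
  have hC := cI_nonneg hp C Y X
  have hX := cI_nonneg hp X Y fun ω => (W ω, C ω)
  simp only [cI, cH] at h hC hX ⊢
  linarith

theorem cI_le_cI_prod_add_cI {p : Ω → ℝ} (hp : ∀ ω, 0 ≤ p ω) (A : Ω → α) (B : Ω → β)
    (C : Ω → γ) (D : Ω → δ) : cI p A B C ≤ cI p A B (fun ω => (C ω, D ω)) + cI p D A C := by
  -- both sides expand `I(A;B,D∣C)` by the chain rule; they differ by `I(A;D∣B,C)`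
  have hACD : H p (fun ω => (A ω, (C ω, D ω))) = H p (fun ω => ((D ω, A ω), C ω)) :=
    H_comp_of_injective p (fun ω => ((D ω, A ω), C ω)) (f := fun t => (t.1.2, (t.2, t.1.1)))
      fun _ _ h => by simp_all [Prod.ext_iff]
  have hCD : H p (fun ω => (C ω, D ω)) = H p (fun ω => (D ω, C ω)) :=
    H_comp_of_injective p (fun ω => (D ω, C ω)) (f := Prod.swap) Prod.swap_injective
  have hABC : H p (fun ω => ((A ω, B ω), C ω)) = H p (fun ω => (A ω, (B ω, C ω))) :=
    H_comp_of_injective p (fun ω => (A ω, (B ω, C ω))) (f := (Equiv.prodAssoc _ _ _).symm)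
      (Equiv.prodAssoc _ _ _).symm.injective
  have hBCD : H p (fun ω => (B ω, (C ω, D ω))) = H p (fun ω => (D ω, (B ω, C ω))) :=
    H_comp_of_injective p (fun ω => (D ω, (B ω, C ω))) (f := fun t => (t.2.1, (t.2.2, t.1)))
      fun _ _ h => by simp_all [Prod.ext_iff]
  have hABCD :
      H p (fun ω => ((A ω, B ω), (C ω, D ω))) = H p (fun ω => ((A ω, D ω), (B ω, C ω))) :=
    H_comp_of_injective p (fun ω => ((A ω, D ω), (B ω, C ω)))
      (f := fun t => ((t.1.1, t.2.1), (t.2.2, t.1.2))) fun _ _ h => by simp_all [Prod.ext_iff]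
  have hD := cI_nonneg hp A D fun ω => (B ω, C ω)
  simp only [cI, cH] at hD ⊢
  linarith

end IT

open IT in
/-- If `(V₀,V₁,V₂) ↔ X ↔ Y₂` is a Markov chain, then
`I(X;Y₂∣V₀,V₁) ≥ I(V₂;Y₂∣V₀) - I(V₁;V₂∣V₀)`. -/
theorem stmt0 {Ω A0 A1 A2 AX AY : Type} [Fintype Ω]
    [Fintype A0] [DecidableEq A0] [Fintype A1] [DecidableEq A1]
    [Fintype A2] [DecidableEq A2] [Fintype AX] [DecidableEq AX]
    [Fintype AY] [DecidableEq AY]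
    (p : Ω → ℝ) (hp : IsPMF p)
    (V0 : Ω → A0) (V1 : Ω → A1) (V2 : Ω → A2) (X : Ω → AX) (Y2 : Ω → AY)
    (hMarkov : CondIndep p (fun ω => (V0 ω, V1 ω, V2 ω)) Y2 X) :
    cI p X Y2 (fun ω => (V0 ω, V1 ω)) ≥ cI p V2 Y2 V0 - cI p V1 V2 V0 := by
  have hMarkov' : cI p (fun ω => (V2 ω, (V0 ω, V1 ω))) Y2 X = 0 := by
    rw [← cI_eq_zero_of_condIndep hp.1 hMarkov]
    exact cI_comp_left_of_injective p (fun ω => (V0 ω, V1 ω, V2 ω)) Y2 X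
      (f := fun t => (t.2.2, (t.1, t.2.1))) fun _ _ h => by simp_all [Prod.ext_iff]
  calc cI p V2 Y2 V0 - cI p V1 V2 V0 ≤ cI p V2 Y2 fun ω => (V0 ω, V1 ω) := by
        linarith [cI_le_cI_prod_add_cI hp.1 V2 Y2 V0 V1]
    _ ≤ cI p X Y2 fun ω => (V0 ω, V1 ω) := cI_le_cI_of_cI_eq_zero hp.1 hMarkov'
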